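/- Let μ = (μ_1, …, μ_n) be a strictly positive probability distribution on a finite alphabet of size n ≥ 2 and K an n × m row-stochastic matrix with μK strictly positive. Define η̃_2(μ, K) = sup { D_2(νK‖μK)/D_2(ν‖μ) : ν a probability distribution with ν ≠ μ and ν_j = 0 for at least one index j }. Then η_2(μ, K) = max { η̃_2(μ, K), η_{χ²}(μ, K) }. -/

import Mathlib

open scoped BigOperators

noncomputable section

section Defs

variable {X Y : Type*} [Fintype X] [Fintype Y]

/-- `μ` is a probability distribution on the finite alphabet `X`. -/
def IsProbDist (μ : X → ℝ) : Prop := (∀ x, 0 ≤ μ x) ∧ ∑ x, μ x = 1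

/-- `K` is a Markov kernel (row-stochastic matrix) from `X` to `Y`. -/
def IsKernel (K : X → Y → ℝ) : Prop := (∀ x y, 0 ≤ K x y) ∧ ∀ x, ∑ y, K x y = 1

/-- Action of the kernel on a distribution: `(μK)(y) = ∑ₓ μ(x) K(y|x)`. -/
def push (μ : X → ℝ) (K : X → Y → ℝ) (y : Y) : ℝ := ∑ x, μ x * K x y

/-- Rényi divergence of order `α`: `D_α(ν‖μ) = (α-1)⁻¹ log ∑ₓ μ(x) (ν(x)/μ(x))^α`. -/
def renyiD (α : ℝ) (ν μ : X → ℝ) : ℝ :=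
  (α - 1)⁻¹ * Real.log (∑ x, μ x * (ν x / μ x) ^ α)

/-- χ²-divergence: `χ²(ν‖μ) = ∑ₓ (ν(x) - μ(x))²/μ(x)`. -/
def chiSq (ν μ : X → ℝ) : ℝ := ∑ x, (ν x - μ x) ^ 2 / μ x

/-- SDPI constant of the Rényi divergence of order `α` for the pair `(μ, K)`. -/
def etaAlpha (α : ℝ) (μ : X → ℝ) (K : X → Y → ℝ) : ℝ :=
  sSup {r : ℝ | ∃ ν : X → ℝ, IsProbDist ν ∧ ν ≠ μ ∧
    r = renyiD α (push ν K) (push μ K) / renyiD α ν μ}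

/-- SDPI constant of the χ²-divergence for the pair `(μ, K)`. -/
def etaChi (μ : X → ℝ) (K : X → Y → ℝ) : ℝ :=
  sSup {r : ℝ | ∃ ν : X → ℝ, IsProbDist ν ∧ ν ≠ μ ∧
    r = chiSq (push ν K) (push μ K) / chiSq ν μ}

end Defs

section D2Defs

variable {X Y : Type*} [Fintype X] [Fintype Y]

/-- Rényi divergence of order 2: `D₂(ν‖μ) = log ∑ⱼ νⱼ²/μⱼ`. -/
def D2 (ν μ : X → ℝ) : ℝ := Real.log (∑ x, ν x ^ 2 / μ x)

/-- SDPI constant of the order-2 Rényi divergence for the pair `(μ, K)`. -/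
def eta2 (μ : X → ℝ) (K : X → Y → ℝ) : ℝ :=
  sSup {r : ℝ | ∃ ν : X → ℝ, IsProbDist ν ∧ ν ≠ μ ∧
    r = D2 (push ν K) (push μ K) / D2 ν μ}

end D2Defs


section AuxLemmas

set_option linter.unusedSectionVars false
set_option linter.unusedVariables false

variable {X Y : Type*} [Fintype X] [Fintype Y]

lemma chiSq_nonneg (ν μ : X → ℝ) (hμ : ∀ x, 0 ≤ μ x) : 0 ≤ chiSq ν μ :=
  Finset.sum_nonneg fun x _ => div_nonneg (sq_nonneg _) (hμ x)

lemma chiSq_pos (ν μ : X → ℝ) (hμ : ∀ x, 0 < μ x) (h : ν ≠ μ) : 0 < chiSq ν μ := by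
  obtain ⟨x0, hx0⟩ := Function.ne_iff.mp h
  refine Finset.sum_pos' (fun x _ => div_nonneg (sq_nonneg _) (hμ x).le)
    ⟨x0, Finset.mem_univ _, div_pos ?_ (hμ x0)⟩
  have : ν x0 - μ x0 ≠ 0 := sub_ne_zero.mpr hx0
  positivity

lemma D2_eq_log (ν μ : X → ℝ) (hμpos : ∀ x, 0 < μ x)
    (hμ1 : ∑ x, μ x = 1) (hν1 : ∑ x, ν x = 1) :
    D2 ν μ = Real.log (1 + chiSq ν μ) := by
  have key : ∑ x, ν x ^ 2 / μ x = 1 + chiSq ν μ := by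
    have h1 : ∀ x : X, (ν x - μ x) ^ 2 / μ x = ν x ^ 2 / μ x - 2 * ν x + μ x := by
      intro x
      have := (hμpos x).ne'
      field_simp
      ring
    have h2 : chiSq ν μ = (∑ x, ν x ^ 2 / μ x) - 2 * (∑ x, ν x) + ∑ x, μ x := by
      unfold chiSq
      rw [Finset.sum_congr rfl fun x _ => h1 x, Finset.sum_add_distrib,
        Finset.sum_sub_distrib, ← Finset.mul_sum]
    rw [h2, hμ1, hν1]; ring
  unfold D2; rw [key]

lemma push_sum_one (ν : X → ℝ) (K : X → Y → ℝ) (hK : IsKernel K)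
    (hν1 : ∑ x, ν x = 1) : ∑ y, push ν K y = 1 := by
  unfold push
  rw [Finset.sum_comm]
  calc ∑ x, ∑ y, ν x * K x y = ∑ x, ν x * ∑ y, K x y := by
        exact Finset.sum_congr rfl fun x _ => (Finset.mul_sum _ _ _).symm
    _ = 1 := by simp only [hK.2, mul_one]; exact hν1

lemma push_sub (ν μ : X → ℝ) (K : X → Y → ℝ) (y : Y) :
    push ν K y - push μ K y = ∑ x, (ν x - μ x) * K x y := by
  unfold push
  rw [← Finset.sum_sub_distrib]
  exact Finset.sum_congr rfl fun x _ => by ring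

lemma chiSq_push_le (ν μ : X → ℝ) (K : X → Y → ℝ) (hK : IsKernel K)
    (hμpos : ∀ x, 0 < μ x) (hout : ∀ y, 0 < push μ K y) :
    chiSq (push ν K) (push μ K) ≤ chiSq ν μ := by
  classical
  have key : ∀ y, (push ν K y - push μ K y) ^ 2 / push μ K y
      ≤ ∑ x, (ν x - μ x) ^ 2 / μ x * K x y := by
    intro y
    set s := Finset.univ.filter (fun x : X => 0 < K x y) with hs
    have hKzero : ∀ x ∈ Finset.univ, x ∉ s → K x y = 0 := by
      intro x _ hx
      simp only [hs, Finset.mem_filter, Finset.mem_univ, true_and] at hx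
      have := hK.1 x y
      linarith [lt_or_eq_of_le this]
    have hfs : ∑ x ∈ s, (ν x - μ x) * K x y = push ν K y - push μ K y := by
      rw [push_sub]
      exact Finset.sum_subset s.subset_univ (fun x hx hxs => by rw [hKzero x hx hxs, mul_zero])
    have hgs : ∑ x ∈ s, μ x * K x y = push μ K y := by
      unfold push
      exact Finset.sum_subset s.subset_univ (fun x hx hxs => by rw [hKzero x hx hxs, mul_zero])
    have CS := Finset.sq_sum_div_le_sum_sq_div s (fun x => (ν x - μ x) * K x y)
      (g := fun x => μ x * K x y)
      (fun x hx => mul_pos (hμpos x) ((Finset.mem_filter.mp hx).2))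
    rw [hfs, hgs] at CS
    refine CS.trans ?_
    have heq : ∀ x ∈ s, ((ν x - μ x) * K x y) ^ 2 / (μ x * K x y)
        = (ν x - μ x) ^ 2 / μ x * K x y := by
      intro x hx
      have hk : K x y ≠ 0 := ((Finset.mem_filter.mp hx).2).ne'
      have hm : μ x ≠ 0 := (hμpos x).ne'
      field_simp
    rw [Finset.sum_congr rfl heq]
    refine Finset.sum_le_sum_of_subset_of_nonneg s.subset_univ (fun x _ _ => ?_)
    exact mul_nonneg (div_nonneg (sq_nonneg _) (hμpos x).le) (hK.1 x y)
  calc chiSq (push ν K) (push μ K)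
      ≤ ∑ y, ∑ x, (ν x - μ x) ^ 2 / μ x * K x y :=
        Finset.sum_le_sum fun y _ => key y
    _ = ∑ x, (ν x - μ x) ^ 2 / μ x * ∑ y, K x y := by
        rw [Finset.sum_comm]
        exact Finset.sum_congr rfl fun x _ => (Finset.mul_sum _ _ _).symm
    _ = chiSq ν μ := by simp only [hK.2, mul_one]; rfl

lemma log_ratio_mono {c u v : ℝ} (hc0 : 0 ≤ c) (hc1 : c ≤ 1) (hu : 0 < u) (huv : u ≤ v) :
    Real.log (1 + c * u) / Real.log (1 + u) ≤ Real.log (1 + c * v) / Real.log (1 + v) := by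
  have hv : 0 < v := lt_of_lt_of_le hu huv
  have hlu : 0 < Real.log (1 + u) := Real.log_pos (by linarith)
  have hlv : 0 < Real.log (1 + v) := Real.log_pos (by linarith)
  have hcu0 : 0 ≤ c * u := mul_nonneg hc0 hu.le
  have hcv0 : 0 ≤ c * v := mul_nonneg hc0 hv.le
  set r := Real.log (1 + c * v) / Real.log (1 + v) with hr
  have hr0 : 0 ≤ r := div_nonneg (Real.log_nonneg (by linarith)) hlv.le
  have hr1 : r ≤ 1 := by
    rw [div_le_one hlv]
    exact Real.log_le_log (by linarith) (by nlinarith)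
  have hpow : (1 + v) ^ r = 1 + c * v := by
    rw [hr, Real.rpow_def_of_pos (by linarith : (0:ℝ) < 1 + v), mul_comm,
      div_mul_cancel₀ _ hlv.ne', Real.exp_log (by linarith)]
  have hconc : 1 + c * u ≤ (1 + u) ^ r := by
    have h := (Real.concaveOn_rpow hr0 hr1).2
      (show (1:ℝ) ∈ Set.Ici (0:ℝ) from Set.mem_Ici.mpr (by norm_num))
      (show (1 + v : ℝ) ∈ Set.Ici (0:ℝ) from Set.mem_Ici.mpr (by linarith))
      (show (0:ℝ) ≤ 1 - u / v from by
        rw [sub_nonneg]; exact div_le_one_of_le₀ huv hv.le)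
      (show (0:ℝ) ≤ u / v from by positivity)
      (show (1 - u / v) + u / v = 1 from by ring)
    simp only [smul_eq_mul] at h
    have h1 : (1 - u / v) * (1:ℝ) + u / v * (1 + v) = 1 + u := by
      field_simp
      ring
    have h2 : (1:ℝ) ^ r = 1 := Real.one_rpow r
    rw [h1, h2, hpow] at h
    calc 1 + c * u = (1 - u / v) * 1 + u / v * (1 + c * v) := by field_simp; ring
      _ ≤ (1 + u) ^ r := h
  rw [div_le_iff₀ hlu]
  calc Real.log (1 + c * u) ≤ Real.log ((1 + u) ^ r) :=
        Real.log_le_log (by linarith) hconc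
    _ = r * Real.log (1 + u) := Real.log_rpow (by linarith) r

lemma chi_ratio_le_log_ratio {s S : ℝ} (hs : 0 < s) (hS0 : 0 ≤ S) (hSs : S ≤ s) :
    S / s ≤ Real.log (1 + S) / Real.log (1 + s) := by
  have hls : 0 < Real.log (1 + s) := Real.log_pos (by linarith)
  set c := S / s with hc
  have hc0 : 0 ≤ c := div_nonneg hS0 hs.le
  have hc1 : c ≤ 1 := div_le_one_of_le₀ hSs hs.le
  have hcs : c * s = S := div_mul_cancel₀ _ hs.ne'
  rw [div_le_div_iff₀ hs hls]
  have bern : (1 + s) ^ c ≤ 1 + c * s :=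
    rpow_one_add_le_one_add_mul_self (by linarith) hc0 hc1
  have : c * Real.log (1 + s) ≤ Real.log (1 + c * s) := by
    calc c * Real.log (1 + s) = Real.log ((1 + s) ^ c) := (Real.log_rpow (by linarith) c).symm
      _ ≤ Real.log (1 + c * s) := Real.log_le_log (Real.rpow_pos_of_pos (by linarith) c) bern
  rw [hcs] at this
  nlinarith [this, hls]


end AuxLemmas

/-- `η̃_2(μ, K)`: the supremum of `D₂(νK‖μK)/D₂(ν‖μ)` over probability
distributions `ν ≠ μ` having at least one zero entry. -/
def eta2Tilde {X Y : Type*} [Fintype X] [Fintype Y]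
    (μ : X → ℝ) (K : X → Y → ℝ) : ℝ :=
  sSup {r : ℝ | ∃ ν : X → ℝ, IsProbDist ν ∧ ν ≠ μ ∧ (∃ j, ν j = 0) ∧
    r = D2 (push ν K) (push μ K) / D2 ν μ}

/-- Corollary to Theorem 3: `η_2(μ, K) = max { η̃_2(μ, K), η_{χ²}(μ, K) }`. -/
theorem eta2_eq_max_tilde_chiSq
    (n m : ℕ) (hn : 2 ≤ n)
    (K : Fin n → Fin m → ℝ) (hK : IsKernel K)
    (μ : Fin n → ℝ) (hμ : IsProbDist μ) (hμpos : ∀ i, 0 < μ i)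
    (hout : ∀ j, 0 < push μ K j) :
    eta2 μ K = max (eta2Tilde μ K) (etaChi μ K) := by
  classical
  have hμ2 := hμ.2
  -- representation of the D2 ratio
  have repr : ∀ ν : Fin n → ℝ, IsProbDist ν → ν ≠ μ →
      D2 (push ν K) (push μ K) / D2 ν μ =
      Real.log (1 + chiSq (push ν K) (push μ K)) / Real.log (1 + chiSq ν μ) := by
    intro ν hν hne
    rw [D2_eq_log ν μ hμpos hμ.2 hν.2,
      D2_eq_log (push ν K) (push μ K) hout (push_sum_one μ K hK hμ.2)
        (push_sum_one ν K hK hν.2)]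
  have bound : ∀ ν : Fin n → ℝ, IsProbDist ν → ν ≠ μ →
      0 ≤ D2 (push ν K) (push μ K) / D2 ν μ ∧
      D2 (push ν K) (push μ K) / D2 ν μ ≤ 1 := by
    intro ν hν hne
    have hs := chiSq_pos ν μ hμpos hne
    have hS0 := chiSq_nonneg (push ν K) (push μ K) (fun y => (hout y).le)
    have hSs := chiSq_push_le ν μ K hK hμpos hout
    have hls : 0 < Real.log (1 + chiSq ν μ) := Real.log_pos (by linarith)
    rw [repr ν hν hne]
    refine ⟨div_nonneg (Real.log_nonneg (by linarith)) hls.le, ?_⟩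
    rw [div_le_one hls]
    exact Real.log_le_log (by linarith) (by linarith)
  -- bounds on the three sets
  have bddT : BddAbove {r : ℝ | ∃ ν : Fin n → ℝ, IsProbDist ν ∧ ν ≠ μ ∧
      r = D2 (push ν K) (push μ K) / D2 ν μ} := by
    refine ⟨1, fun r hr => ?_⟩
    obtain ⟨ν, hν, hne, hrr⟩ := hr
    exact hrr ▸ (bound ν hν hne).2
  have bddTt : BddAbove {r : ℝ | ∃ ν : Fin n → ℝ, IsProbDist ν ∧ ν ≠ μ ∧ (∃ j, ν j = 0) ∧
      r = D2 (push ν K) (push μ K) / D2 ν μ} := by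
    refine ⟨1, fun r hr => ?_⟩
    obtain ⟨ν, hν, hne, _, hrr⟩ := hr
    exact hrr ▸ (bound ν hν hne).2
  -- a witness distribution with a zero entry
  have h10 : (⟨1, by omega⟩ : Fin n) ≠ (⟨0, by omega⟩ : Fin n) := by
    simp [Fin.ext_iff]
  set δ : Fin n → ℝ := fun i => if i = ⟨0, by omega⟩ then 1 else 0 with hδdef
  have hδprob : IsProbDist δ := by
    constructor
    · intro i; simp only [hδdef]; split <;> norm_num
    · simp [hδdef]
  have hδ1 : δ ⟨1, by omega⟩ = 0 := by simp [hδdef, h10]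
  have hδne : δ ≠ μ := by
    intro h
    exact (hμpos ⟨1, by omega⟩).ne' (by rw [← congrFun h ⟨1, by omega⟩]; exact hδ1)
  have hδmemT : D2 (push δ K) (push μ K) / D2 δ μ ∈
      {r : ℝ | ∃ ν : Fin n → ℝ, IsProbDist ν ∧ ν ≠ μ ∧
        r = D2 (push ν K) (push μ K) / D2 ν μ} := ⟨δ, hδprob, hδne, rfl⟩
  have hδmemTt : D2 (push δ K) (push μ K) / D2 δ μ ∈
      {r : ℝ | ∃ ν : Fin n → ℝ, IsProbDist ν ∧ ν ≠ μ ∧ (∃ j, ν j = 0) ∧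
        r = D2 (push ν K) (push μ K) / D2 ν μ} :=
    ⟨δ, hδprob, hδne, ⟨⟨1, by omega⟩, hδ1⟩, rfl⟩
  have eta2_nonneg : 0 ≤ eta2 μ K :=
    le_trans (bound δ hδprob hδne).1 (le_csSup bddT hδmemT)
  have tilde_nonneg : 0 ≤ eta2Tilde μ K :=
    le_trans (bound δ hδprob hδne).1 (le_csSup bddTt hδmemTt)
  -- eta2Tilde ≤ eta2
  have h1 : eta2Tilde μ K ≤ eta2 μ K := by
    refine Real.sSup_le (fun r hr => ?_) eta2_nonneg
    obtain ⟨ν, hν, hne, _, hrr⟩ := hr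
    exact le_csSup bddT ⟨ν, hν, hne, hrr⟩
  -- etaChi ≤ eta2
  have h2 : etaChi μ K ≤ eta2 μ K := by
    refine Real.sSup_le (fun r hr => ?_) eta2_nonneg
    obtain ⟨ν, hν, hne, hrr⟩ := hr
    have hs := chiSq_pos ν μ hμpos hne
    have hS0 := chiSq_nonneg (push ν K) (push μ K) (fun y => (hout y).le)
    have hSs := chiSq_push_le ν μ K hK hμpos hout
    have key := chi_ratio_le_log_ratio hs hS0 hSs
    rw [← repr ν hν hne] at key
    exact hrr ▸ key.trans (le_csSup bddT ⟨ν, hν, hne, rfl⟩)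
  -- eta2 ≤ eta2Tilde : push any ν to the boundary along the ray from μ
  have h3 : eta2 μ K ≤ eta2Tilde μ K := by
    refine Real.sSup_le (fun r hr => ?_) tilde_nonneg
    obtain ⟨ν, hν, hne, hrr⟩ := hr
    have hexlt : ∃ i, ν i < μ i := by
      by_contra hcon
      push_neg at hcon
      apply hne
      funext i
      have hsum : ∑ i, (ν i - μ i) = 0 := by
        rw [Finset.sum_sub_distrib, hν.2, hμ.2]; ring
      have := (Finset.sum_eq_zero_iff_of_nonneg
        (fun i _ => sub_nonneg.mpr (hcon i))).mp hsum i (Finset.mem_univ i)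
      linarith
    obtain ⟨i0, hi0A, hi0min⟩ := Finset.exists_min_image
      (Finset.univ.filter fun i => ν i < μ i) (fun i => μ i / (μ i - ν i))
      (by obtain ⟨i, hi⟩ := hexlt
          exact ⟨i, Finset.mem_filter.mpr ⟨Finset.mem_univ _, hi⟩⟩)
    have hlt0 : ν i0 < μ i0 := (Finset.mem_filter.mp hi0A).2
    have hd0 : 0 < μ i0 - ν i0 := sub_pos.mpr hlt0
    set t := μ i0 / (μ i0 - ν i0) with htdef
    have ht1 : 1 ≤ t := (one_le_div hd0).mpr (by linarith [hν.1 i0])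
    set ν' : Fin n → ℝ := fun i => μ i + t * (ν i - μ i) with hν'def
    have hν'sum : ∑ i, ν' i = 1 := by
      simp only [hν'def]
      rw [Finset.sum_add_distrib, ← Finset.mul_sum, Finset.sum_sub_distrib, hν.2, hμ.2]
      ring
    have hν'nonneg : ∀ i, 0 ≤ ν' i := by
      intro i
      by_cases hc : ν i < μ i
      · have hdi : 0 < μ i - ν i := sub_pos.mpr hc
        have hmin := hi0min i (Finset.mem_filter.mpr ⟨Finset.mem_univ _, hc⟩)
        have hprod : t * (μ i - ν i) ≤ μ i := by
          rw [← le_div_iff₀ hdi]; exact hmin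
        simp only [hν'def]; nlinarith
      · push_neg at hc
        simp only [hν'def]
        nlinarith [mul_nonneg (le_trans zero_le_one ht1) (sub_nonneg.mpr hc), (hμpos i).le]
    have hν'zero : ν' i0 = 0 := by
      have hcancel : t * (μ i0 - ν i0) = μ i0 := div_mul_cancel₀ _ hd0.ne'
      simp only [hν'def]
      nlinarith [hcancel]
    have hν'ne : ν' ≠ μ := by
      intro h
      exact (hμpos i0).ne' (by rw [← congrFun h i0]; exact hν'zero)
    have hchi' : chiSq ν' μ = t ^ 2 * chiSq ν μ := by
      unfold chiSq
      rw [Finset.mul_sum]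
      refine Finset.sum_congr rfl fun i _ => ?_
      have hmi := (hμpos i).ne'
      simp only [hν'def]
      field_simp
      ring
    have hpushsub : ∀ y, push ν' K y - push μ K y = t * (push ν K y - push μ K y) := by
      intro y
      rw [push_sub, push_sub, Finset.mul_sum]
      refine Finset.sum_congr rfl fun i _ => ?_
      simp only [hν'def]; ring
    have hchiP' : chiSq (push ν' K) (push μ K) = t ^ 2 * chiSq (push ν K) (push μ K) := by
      unfold chiSq
      rw [Finset.mul_sum]
      refine Finset.sum_congr rfl fun y _ => ?_
      rw [hpushsub y]
      have hmy := (hout y).ne'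
      field_simp
    set s := chiSq ν μ with hsdef
    set S := chiSq (push ν K) (push μ K) with hSdef
    have hs : 0 < s := chiSq_pos ν μ hμpos hne
    have hS0 : 0 ≤ S := chiSq_nonneg (push ν K) (push μ K) (fun y => (hout y).le)
    have hSs : S ≤ s := chiSq_push_le ν μ K hK hμpos hout
    have mono := log_ratio_mono (c := S / s) (u := s) (v := t ^ 2 * s)
      (div_nonneg hS0 hs.le) (div_le_one_of_le₀ hSs hs.le) hs
      (by nlinarith [mul_le_mul ht1 ht1 zero_le_one (le_trans zero_le_one ht1), hs.le])
    have e1 : S / s * s = S := div_mul_cancel₀ _ hs.ne'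
    have e2 : S / s * (t ^ 2 * s) = t ^ 2 * S := by
      field_simp
    rw [e1, e2] at mono
    have hr' : D2 (push ν' K) (push μ K) / D2 ν' μ =
        Real.log (1 + t ^ 2 * S) / Real.log (1 + t ^ 2 * s) := by
      rw [repr ν' ⟨hν'nonneg, hν'sum⟩ hν'ne, hchiP', hchi']
    calc r = Real.log (1 + S) / Real.log (1 + s) := by rw [hrr, repr ν hν hne]
      _ ≤ Real.log (1 + t ^ 2 * S) / Real.log (1 + t ^ 2 * s) := mono
      _ = D2 (push ν' K) (push μ K) / D2 ν' μ := hr'.symm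
      _ ≤ eta2Tilde μ K :=
          le_csSup bddTt ⟨ν', ⟨hν'nonneg, hν'sum⟩, hν'ne, ⟨i0, hν'zero⟩, rfl⟩
  exact le_antisymm (h3.trans (le_max_left _ _)) (max_le h1 h2)
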